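/- arXiv:2603.06893 — 3 statements merged into one kernel-verified Lean document; each statement's English description precedes it below -/
import Mathlib

section
/- Let N ≥ 1, a_i > 0, T_i ≥ 0 for i = 1..N, and P_tot > 0. If P* = (P_1*,...,P_N*) with P_i* ≥ 0 and ∑ P_i* ≤ P_tot minimizes J(P) = ∑_i (log₂(1 + a_i P_i) − T_i)² over the feasible set, then log₂(1 + a_i P_i*) ≤ T_i for every i. -/
/-!
If the rate of channel `i` overshot its target `Tᵢ`, lower `Pᵢ` to the power
`(2 ^ Tᵢ - 1) / aᵢ` that meets the target exactly. This keeps every power nonnegative,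
lowers the total power, and turns the strictly positive `i`-th deviation into zero while
leaving the others unchanged, so it strictly decreases `J`: the point was not a minimizer.
-/

open Real Finset Function

lemma logb_one_add_mul_rpow_sub_one_div {b a : ℝ} (hb₀ : 0 < b) (hb₁ : b ≠ 1) (ha : a ≠ 0)
    (t : ℝ) : logb b (1 + a * ((b ^ t - 1) / a)) = t := by
  rw [mul_div_cancel₀ _ ha, add_sub_cancel, logb_rpow hb₀ hb₁]

lemma lt_of_logb_one_add_mul_lt_logb_one_add_mul {b a p q : ℝ} (hb : 1 < b) (ha : 0 < a)
    (hp : 0 ≤ p) (hq : 0 ≤ q) (h : logb b (1 + a * q) < logb b (1 + a * p)) : q < p := by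
  rw [logb_lt_logb_iff hb (by positivity) (by positivity)] at h
  exact lt_of_mul_lt_mul_left (lt_of_add_lt_add_left h) ha.le

lemma Fintype.sum_apply_update_lt {ι α M : Type*} [Fintype ι] [DecidableEq ι]
    [AddCommMonoid M] [PartialOrder M] [IsOrderedCancelAddMonoid M]
    (g : ι → α → M) (x : ι → α) {i : ι} {v : α} (h : g i v < g i (x i)) :
    ∑ j, g j (update x i v j) < ∑ j, g j (x j) := by
  simp only [apply_update g x i v]
  exact Fintype.sum_strictMono (update_lt_self_iff.mpr h)

theorem no_overshoot_general (N : ℕ)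
    (a T : Fin N → ℝ) (ha : ∀ i, 0 < a i) (hT : ∀ i, 0 ≤ T i)
    (Ptot : ℝ)
    (P : Fin N → ℝ) (hP : ∀ i, 0 ≤ P i) (hsum : ∑ i, P i ≤ Ptot)
    (hopt : ∀ Q : Fin N → ℝ, (∀ i, 0 ≤ Q i) → ∑ i, Q i ≤ Ptot →
      ∑ i, (Real.logb 2 (1 + a i * P i) - T i) ^ 2 ≤
        ∑ i, (Real.logb 2 (1 + a i * Q i) - T i) ^ 2) :
    ∀ i, Real.logb 2 (1 + a i * P i) ≤ T i := by
  intro i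
  by_contra! hover
  set q := ((2 : ℝ) ^ T i - 1) / a i
  have hq_rate : logb 2 (1 + a i * q) = T i :=
    logb_one_add_mul_rpow_sub_one_div two_pos (by norm_num) (ha i).ne' (T i)
  have hq_nonneg : 0 ≤ q :=
    div_nonneg (sub_nonneg.mpr (one_le_rpow one_le_two (hT i))) (ha i).le
  have hq_lt : q < P i :=
    lt_of_logb_one_add_mul_lt_logb_one_add_mul one_lt_two (ha i) (hP i) hq_nonneg
      (hq_rate ▸ hover)
  have hQ_nonneg : ∀ j, 0 ≤ update P i q j :=
    (forall_update_iff P fun _ x ↦ 0 ≤ x).mpr ⟨hq_nonneg, fun j _ ↦ hP j⟩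
  have hQ_sum : ∑ j, update P i q j ≤ Ptot :=
    (Fintype.sum_mono (update_le_self_iff.mpr hq_lt.le)).trans hsum
  refine (hopt _ hQ_nonneg hQ_sum).not_gt
    (Fintype.sum_apply_update_lt (fun j p ↦ (logb 2 (1 + a j * p) - T j) ^ 2) P ?_)
  rw [hq_rate, sub_self, sq, zero_mul]
  exact pow_pos (sub_pos.mpr hover) 2

theorem no_overshoot (N : ℕ) (hN : 1 ≤ N)
    (a T : Fin N → ℝ) (ha : ∀ i, 0 < a i) (hT : ∀ i, 0 ≤ T i)
    (Ptot : ℝ) (hPtot : 0 < Ptot)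
    (P : Fin N → ℝ) (hP : ∀ i, 0 ≤ P i) (hsum : ∑ i, P i ≤ Ptot)
    (hopt : ∀ Q : Fin N → ℝ, (∀ i, 0 ≤ Q i) → ∑ i, Q i ≤ Ptot →
      ∑ i, (Real.logb 2 (1 + a i * P i) - T i) ^ 2 ≤
        ∑ i, (Real.logb 2 (1 + a i * Q i) - T i) ^ 2) :
    ∀ i, Real.logb 2 (1 + a i * P i) ≤ T i :=
  no_overshoot_general N a T ha hT Ptot P hP hsum hopt
end

section
/- For a > 0 and T ≥ 0, the function f(P) = (log₂(1 + aP) − T)² is convex on the interval [0, (2^T − 1)/a]. -/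
/-!
Below the cap, `P ↦ logb 2 (1 + a P) - T` is concave and nonpositive. On `(-∞, 0]` squaring is
convex and antitone, so composing it with a nonpositive concave function gives a convex function.
-/

open Real

theorem ConcaveOn.convexOn_sub_sq {E : Type*} [AddCommGroup E] [Module ℝ E] {s : Set E}
    {f : E → ℝ} {c : ℝ} (hf : ConcaveOn ℝ s f) (hfc : ∀ x ∈ s, f x ≤ c) :
    ConvexOn ℝ s fun x => (f x - c) ^ 2 := by
  refine ⟨hf.1, fun x hx y hy a b ha hb hab => ?_⟩
  have hconc : a * (f x - c) + b * (f y - c) ≤ f (a • x + b • y) - c := by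
    have hmid := hf.2 hx hy ha hb hab
    simp only [smul_eq_mul] at hmid
    linear_combination hmid - c * hab
  have hle : f (a • x + b • y) - c ≤ 0 := sub_nonpos.2 (hfc _ (hf.1 hx hy ha hb hab))
  calc (f (a • x + b • y) - c) ^ 2 ≤ (a * (f x - c) + b * (f y - c)) ^ 2 := by
        nlinarith
    _ ≤ a * (f x - c) ^ 2 + b * (f y - c) ^ 2 := by
        simpa using (even_two.convexOn_pow.2 trivial trivial ha hb hab :
          (a • (f x - c) + b • (f y - c)) ^ 2 ≤ a • (f x - c) ^ 2 + b • (f y - c) ^ 2)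

theorem concaveOn_logb_Ioi {b : ℝ} (hb : 1 < b) : ConcaveOn ℝ (Set.Ioi 0) (logb b) := by
  have hlogb : logb b = fun x => (log b)⁻¹ • log x := by
    ext x
    rw [smul_eq_mul, logb, inv_mul_eq_div]
  rw [hlogb]
  exact strictConcaveOn_log_Ioi.concaveOn.smul (inv_nonneg.2 (log_pos hb).le)

theorem concaveOn_logb_one_add_mul {a b : ℝ} (ha : 0 ≤ a) (hb : 1 < b) :
    ConcaveOn ℝ (Set.Ici 0) fun x => logb b (1 + a * x) := by
  have hcomp := (concaveOn_logb_Ioi hb).comp_affineMap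
    (AffineMap.const ℝ ℝ 1 + a • AffineMap.id ℝ ℝ)
  refine hcomp.subset (fun x (hx : 0 ≤ x) => ?_) (convex_Ici 0)
  show 0 < 1 + a * x
  positivity

theorem logb_one_add_mul_le {a b T x : ℝ} (ha : 0 < a) (hb : 1 < b)
    (hx : x ∈ Set.Icc 0 ((b ^ T - 1) / a)) : logb b (1 + a * x) ≤ T := by
  rw [logb_le_iff_le_rpow hb (add_pos_of_pos_of_nonneg one_pos (mul_nonneg ha.le hx.1))]
  have hax : a * x ≤ b ^ T - 1 := (le_div_iff₀' ha).1 hx.2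
  linarith

theorem convex_on_cap_general (a T : ℝ) (ha : 0 < a) :
    ConvexOn ℝ (Set.Icc (0 : ℝ) ((2 ^ T - 1) / a))
      (fun P : ℝ => (Real.logb 2 (1 + a * P) - T) ^ 2) :=
  ((concaveOn_logb_one_add_mul ha.le one_lt_two).subset Set.Icc_subset_Ici_self
    (convex_Icc _ _)).convexOn_sub_sq fun _ hx => logb_one_add_mul_le ha one_lt_two hx

theorem convex_on_cap (a T : ℝ) (ha : 0 < a) (hT : 0 ≤ T) :
    ConvexOn ℝ (Set.Icc (0 : ℝ) ((2 ^ T - 1) / a))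
      (fun P : ℝ => (Real.logb 2 (1 + a * P) - T) ^ 2) :=
  convex_on_cap_general a T ha
end

section
/- Fix a > 0, T > 0, λ > 0, c = ln 2, and define P(λ) = (2/(λc²))·W₀((λc²/(2a))·2^T) − 1/a. If P(λ) > 0, then P(λ) satisfies the stationarity equation 2(log₂(1 + aP) − T)·a/((1 + aP)·c) + λ = 0. -/
open Real

/-! With `w = W₀(k bᵀ)`, the defining equation `w eʷ = k bᵀ` gives `log (w / k) = T log b - w`,
so `1 + aP = w / k` for `k = λc²/(2a)` has `log₂ (1 + aP) - T = -w / c`, and the stationarity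
equation collapses to `-2ak/c² + λ = 0`. -/

/-- The principal branch of the Lambert W function.  For `z ≥ 0` the equation
`w * exp w = z` has a unique real solution, which is nonnegative, so
`Function.invFun` yields exactly the principal branch `W₀` there. -/
noncomputable def W0 (z : ℝ) : ℝ := Function.invFun (fun w : ℝ => w * Real.exp w) z

theorem W0_mul_exp_self {z : ℝ} (hz : 0 ≤ z) : W0 z * exp (W0 z) = z := by
  have hz_le : z ≤ z * exp z := le_mul_of_one_le_right hz (one_le_exp hz)
  obtain ⟨w, -, hw⟩ := intermediate_value_Icc hz
    (continuous_id.mul continuous_exp).continuousOn ⟨by simpa using hz, hz_le⟩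
  exact Function.invFun_eq ⟨w, hw⟩

theorem W0_pos {z : ℝ} (hz : 0 < z) : 0 < W0 z := by
  by_contra! h
  nlinarith [W0_mul_exp_self hz.le, exp_pos (W0 z)]

theorem log_W0 {z : ℝ} (hz : 0 < z) : log (W0 z) = log z - W0 z := by
  have h := congrArg log (W0_mul_exp_self hz.le)
  rw [log_mul (W0_pos hz).ne' (exp_pos _).ne', log_exp] at h
  linarith

theorem logb_W0_mul_rpow_div {b k : ℝ} (T : ℝ) (hb : 0 < b) (hb1 : b ≠ 1) (hk : 0 < k) :
    logb b (W0 (k * b ^ T) / k) = T - W0 (k * b ^ T) / log b := by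
  have hz : 0 < k * b ^ T := mul_pos hk (rpow_pos_of_pos hb T)
  rw [logb, log_div (W0_pos hz).ne' hk.ne', log_W0 hz, log_mul hk.ne' (rpow_pos_of_pos hb T).ne',
    log_rpow hb]
  have hlog_b : log b ≠ 0 := log_ne_zero_of_pos_of_ne_one hb hb1
  field_simp
  ring

theorem lambert_satisfies_stationarity_general (a T lam : ℝ) (ha : 0 < a) (hlam : 0 < lam) :
    let c : ℝ := Real.log 2
    let P : ℝ := 2 / (lam * c ^ 2) * W0 (lam * c ^ 2 / (2 * a) * 2 ^ T) - 1 / a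
    0 < P →
      2 * (Real.logb 2 (1 + a * P) - T) * a / ((1 + a * P) * c) + lam = 0 := by
  intro c P _
  have hc : 0 < c := log_pos one_lt_two
  have hk : 0 < lam * c ^ 2 / (2 * a) := by positivity
  have hw := W0_pos (mul_pos hk (rpow_pos_of_pos two_pos T))
  have h_arg : 1 + a * P = W0 (lam * c ^ 2 / (2 * a) * 2 ^ T) / (lam * c ^ 2 / (2 * a)) := by
    simp only [P]
    field_simp
    ring
  rw [h_arg, logb_W0_mul_rpow_div T two_pos one_lt_two.ne' hk, show log 2 = c from rfl]
  generalize W0 (lam * c ^ 2 / (2 * a) * 2 ^ T) = w at hw ⊢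
  field_simp
  ring

theorem lambert_satisfies_stationarity (a T lam : ℝ) (ha : 0 < a) (hT : 0 < T) (hlam : 0 < lam) :
    let c : ℝ := Real.log 2
    let P : ℝ := 2 / (lam * c ^ 2) * W0 (lam * c ^ 2 / (2 * a) * 2 ^ T) - 1 / a
    0 < P →
      2 * (Real.logb 2 (1 + a * P) - T) * a / ((1 + a * P) * c) + lam = 0 :=
  lambert_satisfies_stationarity_general a T lam ha hlam
end
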